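/- Let T ∈ ℝ^{d₁×...×d_N} be an N-th order tensor whose k-th unfolding T^⟨k⟩ satisfies ‖T^⟨k⟩ − T_r^⟨k⟩‖_F ≤ ε for all k, where T_r^⟨k⟩ is the best rank-r approximation. Suppose for a fixed k the cross approximation with intersection matrix U = T^⟨k⟩(I^{≤k}, I^{>k}) (invertible) satisfies κ ≥ max{‖T^⟨k⟩(:,I^{>k}) U^{-1}‖₂, ‖U^{-1} T^⟨k⟩(I^{≤k},:)‖₂}, and that indices can be chosen so that ‖M − C U^{-1} R‖_F ≤ (r+1)ε for the submatrix M = T^⟨k⟩_{I^{≤p−1},I^{>q}} with C = M(:,I^{>k}), R = M(I^{≤k},:). If Ĉ, R̂ satisfy ‖C − Ĉ‖_F ≤ e, ‖R − R̂‖_F ≤ e, and ‖(C − Ĉ)U^{-1}‖₂ ≤ κ, then ‖M − Ĉ U^{-1} R̂‖_F ≤ (r+1)ε + 3κ e. -/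
import Mathlib


open Matrix

/-- Frobenius norm of a real matrix. -/
noncomputable def frobNorm {m n : Type*} [Fintype m] [Fintype n]
    (A : Matrix m n ℝ) : ℝ := Real.sqrt (∑ i, ∑ j, (A i j) ^ 2)

/-- Spectral (operator) norm of a real matrix. -/
noncomputable def specNorm {m n : ℕ} (A : Matrix (Fin m) (Fin n) ℝ) : ℝ :=
  ‖LinearMap.toContinuousLinearMap (Matrix.toEuclideanLin A)‖

/-- `B` is the Moore–Penrose pseudoinverse of `A`. -/
def IsMPInv {m n : ℕ} (A : Matrix (Fin m) (Fin n) ℝ)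
    (B : Matrix (Fin n) (Fin m) ℝ) : Prop :=
  A * B * A = A ∧ B * A * B = B ∧ (A * B)ᵀ = A * B ∧ (B * A)ᵀ = B * A

/-- `B` is the `τ`-truncated Moore–Penrose pseudoinverse of `A`: singular values
of `A` below `τ` are set to zero before pseudoinverting. -/
def IsTruncatedPinv {m n : ℕ} (A : Matrix (Fin m) (Fin n) ℝ) (τ : ℝ)
    (B : Matrix (Fin n) (Fin m) ℝ) : Prop :=
  ∃ (r : ℕ) (W : Matrix (Fin m) (Fin r) ℝ) (V : Matrix (Fin n) (Fin r) ℝ)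
    (σ : Fin r → ℝ),
    Wᵀ * W = 1 ∧ Vᵀ * V = 1 ∧ (∀ i, 0 < σ i) ∧
    A = W * Matrix.diagonal σ * Vᵀ ∧
    B = V * Matrix.diagonal (fun i => if τ ≤ σ i then (σ i)⁻¹ else 0) * Wᵀ

/-- `B` is `A` with its singular values below `τ` set to zero. -/
def IsTruncation {m n : ℕ} (A : Matrix (Fin m) (Fin n) ℝ) (τ : ℝ)
    (B : Matrix (Fin m) (Fin n) ℝ) : Prop :=
  ∃ (r : ℕ) (W : Matrix (Fin m) (Fin r) ℝ) (V : Matrix (Fin n) (Fin r) ℝ)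
    (σ : Fin r → ℝ),
    Wᵀ * W = 1 ∧ Vᵀ * V = 1 ∧ (∀ i, 0 < σ i) ∧
    A = W * Matrix.diagonal σ * Vᵀ ∧
    B = W * Matrix.diagonal (fun i => if τ ≤ σ i then σ i else 0) * Vᵀ

section Aux

open scoped Matrix.Norms.L2Operator in
lemma specNorm_eq_l2 {m n : ℕ} (A : Matrix (Fin m) (Fin n) ℝ) : specNorm A = ‖A‖ := rfl

lemma specNorm_nonneg {m n : ℕ} (A : Matrix (Fin m) (Fin n) ℝ) : 0 ≤ specNorm A :=
  norm_nonneg _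

open scoped Matrix.Norms.L2Operator in
lemma specNorm_transpose {m n : ℕ} (A : Matrix (Fin m) (Fin n) ℝ) :
    specNorm Aᵀ = specNorm A := by
  rw [specNorm_eq_l2, specNorm_eq_l2]
  have : Aᵀ = Aᴴ := by ext i j; simp [Matrix.conjTranspose_apply]
  rw [this, Matrix.l2_opNorm_conjTranspose]

lemma frobNorm_nonneg {m n : Type*} [Fintype m] [Fintype n] (A : Matrix m n ℝ) :
    0 ≤ frobNorm A := Real.sqrt_nonneg _

lemma frobNorm_eq_norm {m n : Type*} [Fintype m] [Fintype n] (A : Matrix m n ℝ) :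
    frobNorm A
      = ‖((WithLp.equiv 2 (m × n → ℝ)).symm fun p => A p.1 p.2 : EuclideanSpace ℝ (m × n))‖ := by
  rw [EuclideanSpace.norm_eq, frobNorm]
  congr 1
  rw [← Finset.sum_product']
  simp [sq_abs]

lemma frobNorm_transpose {m n : Type*} [Fintype m] [Fintype n] (A : Matrix m n ℝ) :
    frobNorm Aᵀ = frobNorm A := by
  rw [frobNorm, frobNorm, Finset.sum_comm]
  rfl

lemma frobNorm_triangle4 {m n : Type*} [Fintype m] [Fintype n]
    (A B C D : Matrix m n ℝ) :
    frobNorm (A + B + C - D) ≤ frobNorm A + frobNorm B + frobNorm C + frobNorm D := by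
  simp only [frobNorm_eq_norm]
  have h1 : ((WithLp.equiv 2 (m × n → ℝ)).symm fun p => (A + B + C - D) p.1 p.2
      : EuclideanSpace ℝ (m × n))
      = ((WithLp.equiv 2 (m × n → ℝ)).symm fun p => A p.1 p.2)
        + ((WithLp.equiv 2 (m × n → ℝ)).symm fun p => B p.1 p.2)
        + ((WithLp.equiv 2 (m × n → ℝ)).symm fun p => C p.1 p.2)
        - ((WithLp.equiv 2 (m × n → ℝ)).symm fun p => D p.1 p.2) := rfl
  rw [h1]
  calc ‖_ + _ + _ - _‖ ≤ ‖_ + _ + _‖ + ‖_‖ := norm_sub_le _ _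
    _ ≤ _ := by
        gcongr
        calc ‖_ + _ + _‖ ≤ ‖_ + _‖ + ‖_‖ := norm_add_le _ _
          _ ≤ _ := by gcongr; exact norm_add_le _ _

lemma mulVec_sqrt_le {m n : ℕ} (A : Matrix (Fin m) (Fin n) ℝ) (x : Fin n → ℝ) :
    Real.sqrt (∑ i, (A.mulVec x i) ^ 2) ≤ specNorm A * Real.sqrt (∑ j, (x j) ^ 2) := by
  have h := (LinearMap.toContinuousLinearMap (Matrix.toEuclideanLin A)).le_opNorm
      ((WithLp.equiv 2 (Fin n → ℝ)).symm x)
  simpa [specNorm, EuclideanSpace.norm_eq, sq_abs] using h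

lemma frobNorm_mul_le_spec_frob {m n p : ℕ} (A : Matrix (Fin m) (Fin n) ℝ)
    (B : Matrix (Fin n) (Fin p) ℝ) :
    frobNorm (A * B) ≤ specNorm A * frobNorm B := by
  have key : ∀ j, ∑ i, ((A * B) i j) ^ 2 ≤ specNorm A ^ 2 * ∑ k, (B k j) ^ 2 := by
    intro j
    have h := mulVec_sqrt_le A (fun k => B k j)
    have hAB : ∀ i, (A * B) i j = A.mulVec (fun k => B k j) i := by
      intro i; simp [Matrix.mul_apply, Matrix.mulVec, dotProduct]
    have h2 : Real.sqrt (∑ i, ((A * B) i j) ^ 2)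
        ≤ specNorm A * Real.sqrt (∑ k, (B k j) ^ 2) := by
      simpa [hAB] using h
    have hnn : (0:ℝ) ≤ ∑ i, ((A * B) i j) ^ 2 := Finset.sum_nonneg fun _ _ => sq_nonneg _
    have hnn2 : (0:ℝ) ≤ ∑ k, (B k j) ^ 2 := Finset.sum_nonneg fun _ _ => sq_nonneg _
    calc ∑ i, ((A * B) i j) ^ 2 = Real.sqrt (∑ i, ((A * B) i j) ^ 2) ^ 2 := by
            rw [Real.sq_sqrt hnn]
      _ ≤ (specNorm A * Real.sqrt (∑ k, (B k j) ^ 2)) ^ 2 := by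
            apply pow_le_pow_left₀ (Real.sqrt_nonneg _) h2
      _ = specNorm A ^ 2 * ∑ k, (B k j) ^ 2 := by
            rw [mul_pow, Real.sq_sqrt hnn2]
  have hsum : ∑ j, ∑ i, ((A * B) i j) ^ 2
      ≤ specNorm A ^ 2 * ∑ j, ∑ k, (B k j) ^ 2 := by
    rw [Finset.mul_sum]; exact Finset.sum_le_sum fun j _ => key j
  rw [frobNorm, frobNorm, Finset.sum_comm]
  calc Real.sqrt (∑ j, ∑ i, ((A * B) i j) ^ 2)
      ≤ Real.sqrt (specNorm A ^ 2 * ∑ j, ∑ k, (B k j) ^ 2) := Real.sqrt_le_sqrt hsum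
    _ = specNorm A * Real.sqrt (∑ j, ∑ k, (B k j) ^ 2) := by
        rw [Real.sqrt_mul (sq_nonneg _), Real.sqrt_sq (specNorm_nonneg A)]
    _ = specNorm A * Real.sqrt (∑ k, ∑ j, (B k j) ^ 2) := by rw [Finset.sum_comm]

lemma frobNorm_mul_le_frob_spec {m n p : ℕ} (A : Matrix (Fin m) (Fin n) ℝ)
    (B : Matrix (Fin n) (Fin p) ℝ) :
    frobNorm (A * B) ≤ frobNorm A * specNorm B := by
  have := frobNorm_mul_le_spec_frob Bᵀ Aᵀ
  rw [← Matrix.transpose_mul, frobNorm_transpose, frobNorm_transpose,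
    specNorm_transpose] at this
  linarith

lemma specNorm_submatrix_row_le {m n b : ℕ} (A : Matrix (Fin m) (Fin n) ℝ)
    (ρ : Fin b → Fin m) (hρ : Function.Injective ρ) :
    specNorm (A.submatrix ρ id) ≤ specNorm A := by
  apply ContinuousLinearMap.opNorm_le_bound _ (specNorm_nonneg A)
  intro x
  set x0 : Fin n → ℝ := WithLp.equiv 2 (Fin n → ℝ) x with hx0
  have hxx : x = (WithLp.equiv 2 (Fin n → ℝ)).symm x0 := rfl
  rw [hxx]
  have happ : (LinearMap.toContinuousLinearMap (Matrix.toEuclideanLin (A.submatrix ρ id)))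
      ((WithLp.equiv 2 (Fin n → ℝ)).symm x0)
      = (WithLp.equiv 2 (Fin b → ℝ)).symm ((A.submatrix ρ id).mulVec x0) := rfl
  rw [happ]
  have hnorm : ‖((WithLp.equiv 2 (Fin b → ℝ)).symm ((A.submatrix ρ id).mulVec x0)
      : EuclideanSpace ℝ (Fin b))‖
      = Real.sqrt (∑ i, ((A.submatrix ρ id).mulVec x0 i) ^ 2) := by
    rw [EuclideanSpace.norm_eq]; simp [sq_abs]
  have hnorm2 : ‖((WithLp.equiv 2 (Fin n → ℝ)).symm x0 : EuclideanSpace ℝ (Fin n))‖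
      = Real.sqrt (∑ j, (x0 j) ^ 2) := by
    rw [EuclideanSpace.norm_eq]; simp [sq_abs]
  rw [hnorm, hnorm2]
  have hmv : ∀ i, (A.submatrix ρ id).mulVec x0 i = A.mulVec x0 (ρ i) := by
    intro i; simp [Matrix.mulVec, Matrix.submatrix, dotProduct]
  have hle : ∑ i, ((A.submatrix ρ id).mulVec x0 i) ^ 2 ≤ ∑ i, (A.mulVec x0 i) ^ 2 := by
    simp only [hmv]
    have := Finset.sum_image (g := ρ) (f := fun i => (A.mulVec x0 i) ^ 2)
      (s := Finset.univ) (fun p _ q _ h => hρ h)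
    rw [← this]
    exact Finset.sum_le_sum_of_subset_of_nonneg (Finset.subset_univ _)
      (fun _ _ _ => sq_nonneg _)
  calc Real.sqrt (∑ i, ((A.submatrix ρ id).mulVec x0 i) ^ 2)
      ≤ Real.sqrt (∑ i, (A.mulVec x0 i) ^ 2) := Real.sqrt_le_sqrt hle
    _ ≤ specNorm A * Real.sqrt (∑ j, (x0 j) ^ 2) := mulVec_sqrt_le A x0

lemma specNorm_submatrix_col_le {m n c : ℕ} (A : Matrix (Fin m) (Fin n) ℝ)
    (σc : Fin c → Fin n) (hσc : Function.Injective σc) :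
    specNorm (A.submatrix id σc) ≤ specNorm A := by
  have h : (A.submatrix id σc)ᵀ = Aᵀ.submatrix σc id := rfl
  have := specNorm_submatrix_row_le Aᵀ σc hσc
  rw [← h, specNorm_transpose, specNorm_transpose] at this
  exact this

end Aux

/-- per-level error transfer for tensor-train cross approximation.
`Tk` is the `k`-th unfolding; `g, f` select the interpolation rows/columns
(intersection matrix `U = Tk(I^{≤k}, I^{>k})`, invertible with inverse `Uinv`);
`ρ, σc` cut out the submatrix `M = Tk_{I^{≤p-1}, I^{>q}}`, with
`C = M(:, I^{>k})` and `R = M(I^{≤k}, :)`. -/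
theorem per_level_error_transfer {M1 M2 a b c : ℕ}
    (Tk : Matrix (Fin M1) (Fin M2) ℝ)
    (g : Fin a → Fin M1) (f : Fin a → Fin M2)
    (hg : Function.Injective g) (hf : Function.Injective f)
    (ρ : Fin b → Fin M1) (σc : Fin c → Fin M2)
    (hρ : Function.Injective ρ) (hσc : Function.Injective σc)
    (Uinv : Matrix (Fin a) (Fin a) ℝ)
    (hUl : Tk.submatrix g f * Uinv = 1) (hUr : Uinv * Tk.submatrix g f = 1)
    (κ ε e : ℝ) (r : ℕ)
    (hκ1 : specNorm (Tk.submatrix id f * Uinv) ≤ κ)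
    (hκ2 : specNorm (Uinv * Tk.submatrix g id) ≤ κ)
    (Chat : Matrix (Fin b) (Fin a) ℝ) (Rhat : Matrix (Fin a) (Fin c) ℝ)
    (happ : frobNorm (Tk.submatrix ρ σc
              - Tk.submatrix ρ f * Uinv * Tk.submatrix g σc) ≤ ((r : ℝ) + 1) * ε)
    (hC : frobNorm (Tk.submatrix ρ f - Chat) ≤ e)
    (hR : frobNorm (Tk.submatrix g σc - Rhat) ≤ e)
    (hEC : specNorm ((Tk.submatrix ρ f - Chat) * Uinv) ≤ κ) :
    frobNorm (Tk.submatrix ρ σc - Chat * Uinv * Rhat)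
      ≤ ((r : ℝ) + 1) * ε + 3 * κ * e := by
  set M := Tk.submatrix ρ σc
  set C := Tk.submatrix ρ f
  set R := Tk.submatrix g σc
  -- basic nonnegativity
  have hκ0 : 0 ≤ κ := le_trans (specNorm_nonneg _) hEC
  have he0 : 0 ≤ e := le_trans (frobNorm_nonneg _) hC
  -- spectral norm bounds for the relevant factors
  have hCU : C * Uinv = (Tk.submatrix id f * Uinv).submatrix ρ id := by
    ext i j; simp [Matrix.mul_apply, C]
  have hCUspec : specNorm (C * Uinv) ≤ κ := by
    rw [hCU]; exact le_trans (specNorm_submatrix_row_le _ ρ hρ) hκ1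
  have hUR : Uinv * R = (Uinv * Tk.submatrix g id).submatrix id σc := by
    ext i j; simp [Matrix.mul_apply, R]
  have hURspec : specNorm (Uinv * R) ≤ κ := by
    rw [hUR]; exact le_trans (specNorm_submatrix_col_le _ σc hσc) hκ2
  -- the algebraic decomposition
  have hdecomp : M - Chat * Uinv * Rhat
      = (M - C * Uinv * R) + ((C - Chat) * (Uinv * R))
        + ((C * Uinv) * (R - Rhat)) - (((C - Chat) * Uinv) * (R - Rhat)) := by
    simp only [Matrix.mul_sub, Matrix.sub_mul, Matrix.mul_assoc]
    abel
  rw [hdecomp]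
  -- bound each of the four terms
  have b1 : frobNorm (M - C * Uinv * R) ≤ ((r : ℝ) + 1) * ε := happ
  have b2 : frobNorm ((C - Chat) * (Uinv * R)) ≤ κ * e := by
    calc frobNorm ((C - Chat) * (Uinv * R))
        ≤ frobNorm (C - Chat) * specNorm (Uinv * R) := frobNorm_mul_le_frob_spec _ _
      _ ≤ e * κ := mul_le_mul hC hURspec (specNorm_nonneg _) he0
      _ = κ * e := mul_comm _ _
  have b3 : frobNorm ((C * Uinv) * (R - Rhat)) ≤ κ * e := by
    calc frobNorm ((C * Uinv) * (R - Rhat))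
        ≤ specNorm (C * Uinv) * frobNorm (R - Rhat) := frobNorm_mul_le_spec_frob _ _
      _ ≤ κ * e := mul_le_mul hCUspec hR (frobNorm_nonneg _) hκ0
  have b4 : frobNorm (((C - Chat) * Uinv) * (R - Rhat)) ≤ κ * e := by
    calc frobNorm (((C - Chat) * Uinv) * (R - Rhat))
        ≤ specNorm ((C - Chat) * Uinv) * frobNorm (R - Rhat) :=
          frobNorm_mul_le_spec_frob _ _
      _ ≤ κ * e := mul_le_mul hEC hR (frobNorm_nonneg _) hκ0
  have htri := frobNorm_triangle4 (M - C * Uinv * R) ((C - Chat) * (Uinv * R))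
    ((C * Uinv) * (R - Rhat)) (((C - Chat) * Uinv) * (R - Rhat))
  linarith
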